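/- arXiv:math/0702035 — 3 statements merged into one kernel-verified Lean document; each statement's English description precedes it below -/
import Mathlib

section
/- In a closed walk, the multiset of non-returned edges (last occurrences of odd edges) forms an even subgraph: every vertex is incident to an even number of non-returned edges, i.e., each vertex appears an even number of times as an endpoint of a non-returned edge (counted with multiplicity). -/
open Finset Classical
noncomputable section
open scoped Classical

/-!
Group the steps of the walk by the edge they traverse. Within each group, discarding the last
step of an odd-sized group leaves an even number of steps, so at every vertex the degree in the
multigraph of non-returned edges has the parity of the degree in the multigraph of all steps.
The latter is even for a closed walk: every visit of a vertex is counted once as the start of a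
step and once as the end of one.
-/

namespace Finset

variable {ι α : Type*}

theorem even_sum_comp_of_even_card_fiber (s : Finset ι) (e : ι → α) (w : α → ℕ)
    (h : ∀ a, Even #{j ∈ s | e j = a}) : Even (∑ j ∈ s, w (e j)) := by
  rw [sum_comp]
  exact even_sum _ fun a _ => (h a).mul_right (w a)

theorem sum_range_succ_eq_sum_range_of_eq {M : Type*} [AddCommMonoid M] (f : ℕ → M) {n : ℕ}
    (h : f n = f 0) : ∑ j ∈ range n, f (j + 1) = ∑ j ∈ range n, f j := by
  cases n with
  | zero => rfl
  | succ m => rw [sum_range_succ, sum_range_succ' f, h]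

variable [LinearOrder ι]

/-- For `e j` the edge traversed at step `j` of a walk, these are its non-returned steps. -/
def lastOddOccurrences (s : Finset ι) (e : ι → α) : Finset ι :=
  s.filter fun j => Odd #{j' ∈ s | e j' = e j} ∧ ∀ j' ∈ s, e j' = e j → j' ≤ j

variable (s : Finset ι) (e : ι → α)

theorem lastOddOccurrences_subset : lastOddOccurrences s e ⊆ s := filter_subset _ _

theorem filter_lastOddOccurrences_eq (a : α) :
    {j ∈ lastOddOccurrences s e | e j = a} =
      {j ∈ {j ∈ s | e j = a} |
        Odd #{j ∈ s | e j = a} ∧ ∀ j' ∈ {j ∈ s | e j = a}, j' ≤ j} := by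
  ext j
  simp only [lastOddOccurrences, mem_filter]
  constructor
  · rintro ⟨⟨hj, hodd, hlast⟩, rfl⟩
    exact ⟨⟨hj, rfl⟩, hodd, fun j' hj' => hlast j' hj'.1 hj'.2⟩
  · rintro ⟨⟨hj, rfl⟩, hodd, hlast⟩
    exact ⟨⟨hj, hodd, fun j' hj' he => hlast j' ⟨hj', he⟩⟩, rfl⟩

theorem card_filter_lastOddOccurrences (a : α) :
    #{j ∈ lastOddOccurrences s e | e j = a} = #{j ∈ s | e j = a} % 2 := by
  rw [filter_lastOddOccurrences_eq]
  set t := {j ∈ s | e j = a}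
  rcases Nat.even_or_odd #t with ht | ht
  · rw [Nat.even_iff.1 ht, card_eq_zero, filter_eq_empty_iff]
    exact fun _ _ h => Nat.not_odd_iff_even.2 ht h.1
  · have hne : t.Nonempty := card_pos.1 ht.pos
    rw [Nat.odd_iff.1 ht, card_eq_one]
    refine ⟨t.max' hne, ?_⟩
    ext j
    simp only [mem_filter, mem_singleton]
    constructor
    · rintro ⟨hj, -, hlast⟩
      exact le_antisymm (le_max' t j hj) (hlast _ (max'_mem t hne))
    · rintro rfl
      exact ⟨max'_mem t hne, ht, fun j' hj' => le_max' t j' hj'⟩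

theorem even_card_filter_sdiff_lastOddOccurrences (a : α) :
    Even #{j ∈ s \ lastOddOccurrences s e | e j = a} := by
  have hsplit : {j ∈ s \ lastOddOccurrences s e | e j = a} =
      {j ∈ s | e j = a} \ {j ∈ lastOddOccurrences s e | e j = a} := by
    ext j
    simp only [mem_filter, mem_sdiff]
    tauto
  rw [hsplit, card_sdiff_of_subset (filter_subset_filter _ (lastOddOccurrences_subset s e)),
    card_filter_lastOddOccurrences]
  exact ⟨#{j ∈ s | e j = a} / 2, by omega⟩

theorem even_sum_lastOddOccurrences_iff (w : α → ℕ) :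
    Even (∑ j ∈ lastOddOccurrences s e, w (e j)) ↔ Even (∑ j ∈ s, w (e j)) := by
  rw [← sum_sdiff (lastOddOccurrences_subset s e), Nat.even_add]
  exact (iff_true_left (even_sum_comp_of_even_card_fiber _ e w
    (even_card_filter_sdiff_lastOddOccurrences s e))).symm

end Finset

theorem Sym2.count_toMultiset_mk {β : Type*} [DecidableEq β] (a b v : β) :
    s(a, b).toMultiset.count v = (if a = v then 1 else 0) + (if b = v then 1 else 0) := by
  simp [Sym2.toMultiset, List.count_cons, add_comm]

theorem even_sum_count_closed_walk {β : Type*} [DecidableEq β] (i : ℕ → β) {n : ℕ}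
    (hclosed : i n = i 0) (v : β) :
    Even (∑ j ∈ range n, s(i j, i (j + 1)).toMultiset.count v) := by
  simp only [Sym2.count_toMultiset_mk, sum_add_distrib]
  rw [sum_range_succ_eq_sum_range_of_eq (fun j => if i j = v then 1 else 0)
    (by simp only [hclosed])]
  exact Even.add_self _

/-- In a closed walk `i 0 → i 1 → ... → i (2*s) = i 0` on `Fin N`, call step `j`
(for `j < 2*s`) *non-returned* if the non-oriented edge `s(i j, i (j+1))` appears an odd
number of times in the walk and `j` is the last occurrence of this edge. Then every
vertex `v` is an endpoint of an even number of non-returned edges, counted with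
multiplicity (a loop at `v` counts twice). -/
theorem nonreturned_edges_form_even_subgraph (N s : ℕ) (i : ℕ → Fin N)
    (hclosed : i (2 * s) = i 0) (v : Fin N) :
    Even (∑ j ∈ (Finset.range (2 * s)).filter (fun j =>
        Odd ((Finset.range (2 * s)).filter
          (fun j' => s(i j', i (j' + 1)) = s(i j, i (j + 1)))).card ∧
        ∀ j' ∈ Finset.range (2 * s),
          s(i j', i (j' + 1)) = s(i j, i (j + 1)) → j' ≤ j),
      ((if i j = v then 1 else 0) + (if i (j + 1) = v then 1 else 0))) := by
  have h := (even_sum_lastOddOccurrences_iff (range (2 * s)) (fun j => s(i j, i (j + 1)))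
    fun z => z.toMultiset.count v).2 (even_sum_count_closed_walk i hclosed v)
  simp only [Sym2.count_toMultiset_mk, lastOddOccurrences] at h
  convert h
end
end

section
/- There exists a constant C > 0 such that for every integer s ≥ 1, every integer l with 0 ≤ l < s, every integer I ≥ 2, and summing over all compositions (s_0, ..., s_{I−1}) of s − l into I positive parts, the product of Catalan numbers satisfies: sum over 2 ≤ I ≤ J of sum over compositions of the product_{i=0}^{I−1} T_{0,2s_i} is at most C^J * T_{0,2s−2l}, where T_{0,2m} is the m-th Catalan number. -/
open Finset

lemma catalan_pos' (n : ℕ) : 0 < catalan n := by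
  have h := succ_mul_catalan_eq_centralBinom n
  by_contra hc
  push_neg at hc
  interval_cases h' : catalan n
  · simp [h'] at h
    exact Nat.centralBinom_ne_zero n h.symm

lemma catalan_succ_le (n : ℕ) : catalan (n + 1) ≤ 4 * catalan n := by
  have h1 : (n + 2) * catalan (n + 1) = Nat.centralBinom (n + 1) :=
    succ_mul_catalan_eq_centralBinom (n + 1)
  have h2 : (n + 1) * Nat.centralBinom (n + 1) = 2 * (2 * n + 1) * Nat.centralBinom n :=
    Nat.succ_mul_centralBinom_succ n
  have h3 : (n + 1) * catalan n = Nat.centralBinom n :=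
    succ_mul_catalan_eq_centralBinom n
  have key : (n + 1) * ((n + 2) * catalan (n + 1)) =
      2 * (2 * n + 1) * ((n + 1) * catalan n) := by
    rw [h1, h3, h2]
  have hle : (n + 1) * ((n + 2) * catalan (n + 1)) ≤ (n + 1) * ((n + 2) * (4 * catalan n)) := by
    rw [key]
    have : 2 * (2 * n + 1) * (n + 1) ≤ (n + 1) * ((n + 2) * 4) := by nlinarith
    calc 2 * (2 * n + 1) * ((n + 1) * catalan n)
        = (2 * (2 * n + 1) * (n + 1)) * catalan n := by ring
      _ ≤ ((n + 1) * ((n + 2) * 4)) * catalan n :=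
          Nat.mul_le_mul_right _ this
      _ = (n + 1) * ((n + 2) * (4 * catalan n)) := by ring
  have h4 := Nat.le_of_mul_le_mul_left hle (by omega)
  exact Nat.le_of_mul_le_mul_left h4 (by omega)

lemma sum_antidiagonalTuple_succ {M : Type*} [AddCommMonoid M] (k n : ℕ)
    (f : (Fin (k + 1) → ℕ) → M) :
    ∑ x ∈ Finset.Nat.antidiagonalTuple (k + 1) n, f x =
      ∑ p ∈ Finset.HasAntidiagonal.antidiagonal n, ∑ x ∈ Finset.Nat.antidiagonalTuple k p.2,
        f (Fin.cons p.1 x) := by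
  rw [← Finset.sum_sigma (Finset.HasAntidiagonal.antidiagonal n)
      (fun p => Finset.Nat.antidiagonalTuple k p.2) (fun q => f (Fin.cons q.1.1 q.2))]
  refine (Finset.sum_nbij' (fun q => Fin.cons q.1.1 q.2)
    (fun x => ⟨(x 0, ∑ i, Fin.tail x i), Fin.tail x⟩) ?_ ?_ ?_ ?_ ?_).symm
  · rintro ⟨⟨a, b⟩, x⟩ hq
    simp only [Finset.mem_sigma, Finset.HasAntidiagonal.mem_antidiagonal,
      Finset.Nat.mem_antidiagonalTuple] at hq ⊢
    rw [Fin.sum_cons, hq.2, hq.1]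
  · intro x hx
    rw [Finset.Nat.mem_antidiagonalTuple] at hx
    refine Finset.mem_sigma.mpr ⟨Finset.HasAntidiagonal.mem_antidiagonal.mpr ?_,
      Finset.Nat.mem_antidiagonalTuple.mpr rfl⟩
    rw [← hx]
    exact (Fin.sum_cons (x 0) (Fin.tail x)).symm.trans (by rw [Fin.cons_self_tail])
  · rintro ⟨⟨a, b⟩, x⟩ hq
    simp only [Finset.mem_sigma, Finset.HasAntidiagonal.mem_antidiagonal,
      Finset.Nat.mem_antidiagonalTuple] at hq
    simp [Fin.cons_zero, Fin.tail_cons, hq.2]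
  · intro x _
    simp [Fin.cons_self_tail]
  · intro q _
    rfl

lemma conv_catalan_le (k n : ℕ) :
    ∑ x ∈ Finset.Nat.antidiagonalTuple k n, ∏ i, catalan (x i) ≤ 4 ^ k * catalan n := by
  induction k generalizing n with
  | zero =>
    cases n with
    | zero => simp
    | succ m => simp
  | succ k ih =>
    rw [sum_antidiagonalTuple_succ]
    have step : ∀ p ∈ Finset.HasAntidiagonal.antidiagonal n,
        ∑ x ∈ Finset.Nat.antidiagonalTuple k p.2, ∏ i, catalan ((Fin.cons p.1 x : Fin (k+1) → ℕ) i)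
          ≤ catalan p.1 * (4 ^ k * catalan p.2) := by
      intro p _
      have : ∑ x ∈ Finset.Nat.antidiagonalTuple k p.2, ∏ i, catalan ((Fin.cons p.1 x : Fin (k+1) → ℕ) i)
          = catalan p.1 * ∑ x ∈ Finset.Nat.antidiagonalTuple k p.2, ∏ i, catalan (x i) := by
        rw [Finset.mul_sum]
        refine Finset.sum_congr rfl fun x _ => ?_
        rw [Fin.prod_univ_succ]; simp
      rw [this]
      exact Nat.mul_le_mul_left _ (ih p.2)
    calc ∑ p ∈ Finset.HasAntidiagonal.antidiagonal n,
          ∑ x ∈ Finset.Nat.antidiagonalTuple k p.2, ∏ i, catalan ((Fin.cons p.1 x : Fin (k+1) → ℕ) i)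
        ≤ ∑ p ∈ Finset.HasAntidiagonal.antidiagonal n, catalan p.1 * (4 ^ k * catalan p.2) :=
          Finset.sum_le_sum step
      _ = 4 ^ k * ∑ p ∈ Finset.HasAntidiagonal.antidiagonal n, catalan p.1 * catalan p.2 := by
          rw [Finset.mul_sum]; exact Finset.sum_congr rfl fun p _ => by ring
      _ = 4 ^ k * catalan (n + 1) := by rw [← catalan_succ']
      _ ≤ 4 ^ k * (4 * catalan n) := Nat.mul_le_mul_left _ (catalan_succ_le n)
      _ = 4 ^ (k + 1) * catalan n := by ring

/-- Bound (belgorod): there is a universal constant `C > 0` such that for all `s, l, J`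
with `0 ≤ l < s`, summing over `2 ≤ I ≤ J` and over all compositions
`(s_0, …, s_{I-1})` of `s - l` into `I` positive parts, the product of Catalan numbers
satisfies `∑_{I=2}^{J} ∑_{s_0+⋯+s_{I-1} = s-l, s_i > 0} ∏_i T_{0,2 s_i} ≤ C^J · T_{0, 2(s-l)}`. -/
theorem sum_compositions_catalan_bound :
    ∃ C : ℝ, 0 < C ∧ ∀ s l J : ℕ, l < s →
      ∑ I ∈ Finset.Icc 2 J,
        ∑ f ∈ (Fintype.piFinset fun _ : Fin I => Finset.Icc 1 (s - l)).filter
            (fun f => ∑ i, f i = s - l),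
          ∏ i, (catalan (f i) : ℝ)
        ≤ C ^ J * (catalan (s - l) : ℝ) := by
  refine ⟨16, by norm_num, fun s l J _ => ?_⟩
  set n := s - l with hn
  have inner : ∀ I : ℕ,
      ∑ f ∈ (Fintype.piFinset fun _ : Fin I => Finset.Icc 1 n).filter
          (fun f => ∑ i, f i = n), ∏ i, (catalan (f i) : ℝ)
        ≤ (4 : ℝ) ^ I * catalan n := by
    intro I
    have hsub : (Fintype.piFinset fun _ : Fin I => Finset.Icc 1 n).filter
        (fun f => ∑ i, f i = n) ⊆ Finset.Nat.antidiagonalTuple I n := by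
      intro f hf
      rw [Finset.mem_filter] at hf
      exact Finset.Nat.mem_antidiagonalTuple.mpr hf.2
    calc ∑ f ∈ (Fintype.piFinset fun _ : Fin I => Finset.Icc 1 n).filter
            (fun f => ∑ i, f i = n), ∏ i, (catalan (f i) : ℝ)
        ≤ ∑ f ∈ Finset.Nat.antidiagonalTuple I n, ∏ i, (catalan (f i) : ℝ) := by
          refine Finset.sum_le_sum_of_subset_of_nonneg hsub fun f _ _ => ?_
          exact Finset.prod_nonneg fun i _ => by positivity
      _ = ((∑ f ∈ Finset.Nat.antidiagonalTuple I n, ∏ i, catalan (f i) : ℕ) : ℝ) := by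
          push_cast; rfl
      _ ≤ ((4 ^ I * catalan n : ℕ) : ℝ) := by
          exact_mod_cast Nat.cast_le.mpr (conv_catalan_le I n)
      _ = (4 : ℝ) ^ I * catalan n := by push_cast; ring
  have cpos : (0 : ℝ) < catalan n := by exact_mod_cast catalan_pos' n
  calc ∑ I ∈ Finset.Icc 2 J,
        ∑ f ∈ (Fintype.piFinset fun _ : Fin I => Finset.Icc 1 n).filter
            (fun f => ∑ i, f i = n), ∏ i, (catalan (f i) : ℝ)
      ≤ ∑ I ∈ Finset.Icc 2 J, (4 : ℝ) ^ I * catalan n :=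
        Finset.sum_le_sum fun I _ => inner I
    _ ≤ ∑ I ∈ Finset.Icc 2 J, (4 : ℝ) ^ J * catalan n := by
        refine Finset.sum_le_sum fun I hI => ?_
        have hIJ : I ≤ J := (Finset.mem_Icc.mp hI).2
        have : (4 : ℝ) ^ I ≤ 4 ^ J := pow_le_pow_right₀ (by norm_num) hIJ
        nlinarith
    _ = (Finset.Icc 2 J).card * ((4 : ℝ) ^ J * catalan n) := by
        rw [Finset.sum_const, nsmul_eq_mul]
    _ ≤ (4 : ℝ) ^ J * ((4 : ℝ) ^ J * catalan n) := by
        have hcard : ((Finset.Icc 2 J).card : ℝ) ≤ (4 : ℝ) ^ J := by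
          have h1 : (Finset.Icc 2 J).card ≤ J := by
            rw [Nat.card_Icc]; omega
          have h2 : (J : ℝ) ≤ (4 : ℝ) ^ J := by
            calc (J : ℝ) ≤ 2 ^ J := by exact_mod_cast Nat.le_of_lt (Nat.lt_two_pow_self (n := J))
              _ ≤ 4 ^ J := by
                apply pow_le_pow_left₀ <;> norm_num
          exact le_trans (by exact_mod_cast h1) h2
        have hpos : (0:ℝ) ≤ (4:ℝ) ^ J * catalan n := by positivity
        exact mul_le_mul_of_nonneg_right hcard hpos
    _ = (16 : ℝ) ^ J * catalan n := by
        rw [show (16 : ℝ) = 4 * 4 by norm_num, mul_pow]; ring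
end

section
/- For every nonnegative integer n, the sum over k from 0 to n of the Beta function values B(3k/2 + 1/2, 3(n−k)/2 + 1/2) = Σ_{k=0}^{n} Γ(3k/2 + 1/2)·Γ(3(n−k)/2 + 1/2) / Γ(3n + 1) is bounded above by a universal constant independent of n. -/
open Finset Real

lemma my_gamma_ge_one {z : ℝ} (hz : 2 ≤ z) : 1 ≤ Real.Gamma z := by
  rcases eq_or_lt_of_le hz with h | h
  · rw [← h, Real.Gamma_two]
  · have := Real.Gamma_strictMonoOn_Ici (Set.mem_Ici.mpr le_rfl)
      (Set.mem_Ici.mpr hz) h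
    rw [Real.Gamma_two] at this
    exact this.le

lemma my_gamma_ge_half {z : ℝ} (hz : 1 ≤ z) : 1/2 ≤ Real.Gamma z := by
  rcases le_or_gt 2 z with h | h
  · linarith [my_gamma_ge_one h]
  -- use convexity of log ∘ Gamma through points z and 3, evaluated at 2
  have hconv := Real.convexOn_log_Gamma
  have hz0 : (0:ℝ) < z := by linarith
  set lam : ℝ := 1 / (3 - z) with hlam
  have h3z : (0:ℝ) < 3 - z := by linarith
  have hlam0 : 0 ≤ lam := by positivity
  have hlam1 : 0 ≤ 1 - lam := by
    rw [hlam, sub_nonneg, div_le_one h3z]; linarith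
  have hsum : lam + (1 - lam) = 1 := by ring
  have hcomb : lam • z + (1 - lam) • (3:ℝ) = 2 := by
    simp only [smul_eq_mul, hlam]
    field_simp
    ring
  have key := hconv.2 (Set.mem_Ioi.mpr hz0) (Set.mem_Ioi.mpr (by norm_num : (0:ℝ) < 3))
    hlam0 hlam1 hsum
  rw [hcomb] at key
  have hG3 : Real.Gamma 3 = 2 := by
    have : (3:ℝ) = (2:ℕ) + 1 := by norm_num
    rw [this, Real.Gamma_nat_eq_factorial]; norm_num
  simp only [Function.comp_apply, Real.Gamma_two, hG3, Real.log_one, smul_eq_mul] at key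
  -- key : 0 ≤ lam * log (Gamma z) + (1 - lam) * log 2
  have hlogz : -Real.log 2 ≤ Real.log (Real.Gamma z) := by
    have hlampos : 0 < lam := by rw [hlam]; positivity
    have h1lam : (1 - lam) = (2 - z) * lam := by
      rw [hlam]; field_simp; ring
    have hlog2 : (0:ℝ) ≤ Real.log 2 := Real.log_nonneg (by norm_num)
    have step : 0 ≤ lam * (Real.log (Real.Gamma z) + (2 - z) * Real.log 2) := by
      nlinarith [key]
    have step2 : 0 ≤ Real.log (Real.Gamma z) + (2 - z) * Real.log 2 :=
      nonneg_of_mul_nonneg_right (by linarith [step]) hlampos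
    nlinarith [mul_nonneg (sub_nonneg.mpr hz) hlog2]
  have := Real.exp_le_exp.mpr hlogz
  rw [Real.exp_log (Real.Gamma_pos_of_pos hz0)] at this
  have hexp : Real.exp (-Real.log 2) = 1/2 := by
    rw [Real.exp_neg, Real.exp_log two_pos]; norm_num
  linarith [hexp ▸ this]

lemma my_gamma_ge_quarter {z : ℝ} (hz : 1 ≤ z) : z/4 ≤ Real.Gamma z := by
  rcases le_or_gt z 2 with h | h
  · linarith [my_gamma_ge_half hz]
  · have h1 : (1:ℝ) ≤ z - 1 := by linarith
    have h0 : z - 1 ≠ 0 := by positivity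
    have : Real.Gamma z = (z - 1) * Real.Gamma (z - 1) := by
      have := Real.Gamma_add_one h0
      simpa using this
    rw [this]
    have := my_gamma_ge_half h1
    nlinarith

lemma my_gamma_superadd {x y : ℝ} (hx : 1 ≤ x) (hy : 1 ≤ y) :
    Real.Gamma x * Real.Gamma y ≤ Real.Gamma (x + y) := by
  have hx0 : (0:ℝ) < x := by linarith
  have hy0 : (0:ℝ) < y := by linarith
  have hs0 : (0:ℝ) < x + y := by linarith
  have hs1 : (0:ℝ) < x + y - 1 := by linarith
  have hconv := Real.convexOn_log_Gamma
  -- f x ≤ (x-1)/(x+y-1) * f (x+y), where f 1 = 0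
  have key : ∀ a b : ℝ, 1 ≤ a → 1 ≤ b →
      Real.log (Real.Gamma a) ≤ (a - 1)/(a + b - 1) * Real.log (Real.Gamma (a + b)) := by
    intro a b ha hb
    have ha0 : (0:ℝ) < a := by linarith
    have hab1 : (0:ℝ) < a + b - 1 := by linarith
    set lam : ℝ := b / (a + b - 1) with hlam
    have hlam0 : 0 ≤ lam := by positivity
    have hlam1 : 0 ≤ 1 - lam := by
      rw [hlam, sub_nonneg, div_le_one hab1]; linarith
    have hsum : lam + (1 - lam) = 1 := by ring
    have hcomb : lam • (1:ℝ) + (1 - lam) • (a + b) = a := by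
      simp only [smul_eq_mul, hlam]
      field_simp
      ring
    have k := hconv.2 (Set.mem_Ioi.mpr one_pos) (Set.mem_Ioi.mpr (by linarith : (0:ℝ) < a + b))
      hlam0 hlam1 hsum
    rw [hcomb] at k
    simp only [Function.comp_apply, Real.Gamma_one, Real.log_one] at k
    simp only [smul_eq_mul] at k
    have h1lam : 1 - lam = (a - 1)/(a + b - 1) := by
      rw [hlam]; field_simp; ring
    calc Real.log (Real.Gamma a) ≤ lam * 0 + (1 - lam) * Real.log (Real.Gamma (a + b)) := k
      _ = (a - 1)/(a + b - 1) * Real.log (Real.Gamma (a + b)) := by rw [h1lam]; ring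
  have k1 := key x y hx hy
  have k2 := key y x hy hx
  rw [add_comm y x] at k2
  have hfs : 0 ≤ Real.log (Real.Gamma (x + y)) :=
    Real.log_nonneg (my_gamma_ge_one (by linarith))
  have hsum : Real.log (Real.Gamma x) + Real.log (Real.Gamma y) ≤
      Real.log (Real.Gamma (x + y)) := by
    have hfrac : (x - 1)/(x + y - 1) + (y - 1)/(x + y - 1) ≤ 1 := by
      rw [← add_div, div_le_one hs1]; linarith
    nlinarith [k1, k2, hfs, mul_le_mul_of_nonneg_right hfrac hfs]
  have := Real.exp_le_exp.mpr hsum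
  rw [Real.exp_add, Real.exp_log (Real.Gamma_pos_of_pos hx0),
    Real.exp_log (Real.Gamma_pos_of_pos hy0),
    Real.exp_log (Real.Gamma_pos_of_pos hs0)] at this
  exact this

/-- The sums of Beta-function values
`∑_{k=0}^{n} Γ(3k/2 + 1/2) Γ(3(n-k)/2 + 1/2) / Γ(3n + 1)` are bounded uniformly in `n`. -/
theorem beta_sum_bounded :
    ∃ C : ℝ, 0 < C ∧ ∀ n : ℕ,
      ∑ k ∈ Finset.range (n + 1),
          Real.Gamma (3 * (k : ℝ) / 2 + 1 / 2) *
              Real.Gamma (3 * ((n : ℝ) - (k : ℝ)) / 2 + 1 / 2) /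
            Real.Gamma (3 * (n : ℝ) + 1)
        ≤ C := by
  refine ⟨48, by norm_num, fun n => ?_⟩
  rcases lt_or_ge n 2 with hn | hn
  · interval_cases n
    · -- n = 0
      simp only [Finset.sum_range_one, Nat.cast_zero]
      norm_num [Real.Gamma_one, Real.Gamma_one_half_eq]
      nlinarith [Real.pi_le_four, Real.sq_sqrt Real.pi_pos.le, Real.sqrt_nonneg π,
        Real.pi_pos]
    · -- n = 1
      rw [Finset.sum_range_succ, Finset.sum_range_one]
      have hG4 : Real.Gamma 4 = 6 := by
        have : (4:ℝ) = (3:ℕ) + 1 := by norm_num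
        rw [this, Real.Gamma_nat_eq_factorial]; norm_num [Nat.factorial]
      have h2 : Real.Gamma 2 = 1 := Real.Gamma_two
      norm_num [Real.Gamma_one_half_eq]
      have hfac : ((Nat.factorial 3 : ℕ) : ℝ) = 6 := by norm_num [Nat.factorial]
      clear hfac
      have hs : Real.sqrt π ≤ 2 := by
        nlinarith [Real.sq_sqrt Real.pi_pos.le, Real.sqrt_nonneg π, Real.pi_le_four]
      nlinarith [Real.sqrt_nonneg π]
  · -- general case : 2 ≤ n
    have hN : (2:ℝ) ≤ (n:ℝ) := by exact_mod_cast hn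
    set N : ℝ := (n:ℝ) with hNdef
    have hG1pos : 0 < Real.Gamma (3*N + 1) := Real.Gamma_pos_of_pos (by linarith)
    have hG2pos : 0 < Real.Gamma (3*N/2 - 2) := Real.Gamma_pos_of_pos (by linarith)
    have hG3pos : 0 < Real.Gamma (3*N/2 + 3) := Real.Gamma_pos_of_pos (by linarith)
    have hterm : ∀ k ∈ Finset.range (n+1),
        Real.Gamma (3 * (k : ℝ) / 2 + 1 / 2) *
            Real.Gamma (3 * (N - (k : ℝ)) / 2 + 1 / 2) / Real.Gamma (3 * N + 1)
          ≤ 4 / Real.Gamma (3*N/2 - 2) := by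
      intro k hk
      have hkn : (k:ℝ) ≤ N := by
        have h' : k ≤ n := by
          have := Finset.mem_range.mp hk; omega
        rw [hNdef]
        exact_mod_cast h'
      have hk0 : (0:ℝ) ≤ (k:ℝ) := Nat.cast_nonneg k
      set a : ℝ := 3 * (k:ℝ) / 2 + 1/2 with hadef
      set b : ℝ := 3 * (N - (k:ℝ)) / 2 + 1/2 with hbdef
      have ha : 1/2 ≤ a := by rw [hadef]; linarith
      have hb : 1/2 ≤ b := by rw [hbdef]; linarith
      have hapos : 0 < a := lt_of_lt_of_le (by norm_num) ha
      have hbpos : 0 < b := lt_of_lt_of_le (by norm_num) hb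
      have hGapos := Real.Gamma_pos_of_pos hapos
      have hGbpos := Real.Gamma_pos_of_pos hbpos
      have hsuper1 : Real.Gamma (a+1) * Real.Gamma (b+1) ≤ Real.Gamma ((a+1)+(b+1)) :=
        my_gamma_superadd (by linarith) (by linarith)
      have heq : (a+1)+(b+1) = 3*N/2 + 3 := by rw [hadef, hbdef]; ring
      rw [heq, Real.Gamma_add_one hapos.ne', Real.Gamma_add_one hbpos.ne'] at hsuper1
      have hab : Real.Gamma a * Real.Gamma b ≤ 4 * Real.Gamma (3*N/2 + 3) := by
        have habq : (1:ℝ)/4 ≤ a * b := by nlinarith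
        have h1 := mul_le_mul_of_nonneg_right habq (mul_pos hGapos hGbpos).le
        have h2 : a * Real.Gamma a * (b * Real.Gamma b)
            = a * b * (Real.Gamma a * Real.Gamma b) := by ring
        rw [h2] at hsuper1
        linarith
      have hsuper2 : Real.Gamma (3*N/2+3) * Real.Gamma (3*N/2-2) ≤ Real.Gamma (3*N+1) := by
        have := my_gamma_superadd (x := 3*N/2+3) (y := 3*N/2-2) (by linarith) (by linarith)
        rwa [show 3*N/2+3 + (3*N/2-2) = 3*N+1 by ring] at this
      rw [div_le_div_iff₀ hG1pos hG2pos]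
      have h3 := mul_le_mul_of_nonneg_right hab hG2pos.le
      nlinarith [hsuper2]
    calc ∑ k ∈ Finset.range (n + 1),
          Real.Gamma (3 * (k : ℝ) / 2 + 1 / 2) *
              Real.Gamma (3 * (N - (k : ℝ)) / 2 + 1 / 2) / Real.Gamma (3 * N + 1)
        ≤ ∑ _k ∈ Finset.range (n + 1), 4 / Real.Gamma (3*N/2 - 2) :=
          Finset.sum_le_sum hterm
      _ = (N + 1) * (4 / Real.Gamma (3*N/2 - 2)) := by
          rw [Finset.sum_const, Finset.card_range, nsmul_eq_mul]
          push_cast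
          ring
      _ ≤ 48 := by
          have hquarter : (3*N/2 - 2)/4 ≤ Real.Gamma (3*N/2 - 2) :=
            my_gamma_ge_quarter (by linarith)
          have h1 : 4 / Real.Gamma (3*N/2 - 2) ≤ 16 / (3*N/2 - 2) := by
            rw [div_le_div_iff₀ hG2pos (by linarith)]
            nlinarith
          have h2 : (N + 1) * (4 / Real.Gamma (3*N/2 - 2)) ≤ (N+1) * (16 / (3*N/2 - 2)) :=
            mul_le_mul_of_nonneg_left h1 (by linarith)
          refine h2.trans ?_
          rw [show (N+1) * (16 / (3*N/2 - 2)) = (16*(N+1)) / (3*N/2-2) by ring,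
            div_le_iff₀ (by linarith)]
          nlinarith
end
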